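/- Let G₃ = ∏_{h=0}^{∞} (1 + X^{−3ʰ}) ∈ ℚ((X⁻¹)) (the product converges in the X⁻¹-adic topology). Then every partial quotient of the continued fraction expansion of G₃ over ℚ is linear; equivalently, for every natural number n there exist coprime polynomials x, y ∈ ℚ[X] with deg y = n and deg(yG₃ − x) = −(n + 1). -/

import Mathlib

open Polynomial HahnSeries
open scoped Classical

/-- The degree of a formal Laurent series in `X⁻¹`: writing `F = ∑ f_i X^{-i}`
(a `LaurentSeries` in the variable `t = X⁻¹`), `deg F = -min {i : f_i ≠ 0}`,
with `deg 0 = ⊥`. -/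
noncomputable def lsDeg {K : Type*} [Field K] (F : LaurentSeries K) : WithBot ℤ :=
  if F = 0 then ⊥ else ((-F.order : ℤ) : WithBot ℤ)

/-- A polynomial in `X` viewed as an element of `K((X⁻¹))`, i.e. evaluated at the
inverse `X = t⁻¹` of the `LaurentSeries` variable `t`. -/
noncomputable def polyToLS {K : Type*} [Field K] (p : K[X]) : LaurentSeries K :=
  Polynomial.aeval (HahnSeries.single (-1 : ℤ) (1 : K)) p

/-!
Over `𝔽₃` the partial products `P_m = ∏_{h<m} (1 + t^{3^h})`, `t = X⁻¹`, satisfy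
`(1 + t) P_m² = 1 + t^{3^m}` by the Frobenius identity, so modulo 3 the series `G₃` is, to any
finite precision, a square root of `1 / (1 + t)`. If a Hankel determinant
`det (c_{i+j+1})_{i,j<n}` of the coefficients `c_k` of `G₃` vanished mod 3, a kernel vector would
give polynomials `V ≠ 0` and `W` of degree `< n` with `V P_m ≡ W (mod t^{2n})`, hence
`V² = (1 + t) W²`, whose two sides have degrees of different parity. So these integer
determinants are all nonzero. For any `F ∈ K((X⁻¹))` with nonzero Hankel determinants, the
Hankel system of size `n + 1` produces `x/y` with `deg y ≤ n` and `deg (yF - x) = -(n + 1)`,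
and its invertibility in smaller sizes forces `deg y = n` and `gcd (x, y) = 1`.
-/

section PolyToLS

variable {K : Type*} [Field K]

lemma polyToLS_monomial (n : ℕ) (a : K) :
    polyToLS (monomial n a) = single (-(n : ℤ)) a := by
  rw [polyToLS, aeval_monomial, single_pow, LaurentSeries.algebraMap_apply, C_apply,
    single_mul_single]
  simp

lemma polyToLS_eq_sum {p : K[X]} {N : ℕ} (hN : p.natDegree < N) :
    polyToLS p = ∑ i ∈ Finset.range N, single (-(i : ℤ)) (p.coeff i) := by
  conv_lhs => rw [p.as_sum_range' N hN, polyToLS, map_sum]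
  exact Finset.sum_congr rfl fun i _ => polyToLS_monomial i _

lemma coeff_polyToLS_mul {p : K[X]} {N : ℕ} (hN : p.natDegree < N) (F : LaurentSeries K)
    (j : ℤ) :
    (polyToLS p * F).coeff j = ∑ i ∈ Finset.range N, p.coeff i * F.coeff (j + i) := by
  rw [polyToLS_eq_sum hN, Finset.sum_mul, HahnSeries.coeff_sum]
  refine Finset.sum_congr rfl fun i _ => ?_
  simpa using coeff_single_mul_add (r := p.coeff i) (x := F) (a := j + i) (b := -(i : ℤ))

lemma coeff_polyToLS_neg_natCast (p : K[X]) (k : ℕ) : (polyToLS p).coeff (-k) = p.coeff k := by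
  rw [polyToLS_eq_sum (N := max k p.natDegree + 1) (by omega), HahnSeries.coeff_sum]
  simp [HahnSeries.coeff_single, Finset.sum_ite_eq]

lemma coeff_polyToLS_of_pos (p : K[X]) {j : ℤ} (hj : 0 < j) : (polyToLS p).coeff j = 0 := by
  rw [polyToLS_eq_sum (Nat.lt_succ_self p.natDegree), HahnSeries.coeff_sum]
  exact Finset.sum_eq_zero fun i _ => HahnSeries.coeff_single_of_ne (by omega)

lemma exists_coeff_sub_polyToLS_eq_zero (S : LaurentSeries K) :
    ∃ x : K[X], ∀ j ≤ 0, (S - polyToLS x).coeff j = 0 := by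
  set N := (-S.order).toNat
  refine ⟨∑ k ∈ Finset.range (N + 1), monomial k (S.coeff (-k)), fun j hj => ?_⟩
  obtain ⟨k, rfl⟩ : ∃ k : ℕ, j = -k := ⟨(-j).toNat, by omega⟩
  rw [HahnSeries.coeff_sub, coeff_polyToLS_neg_natCast, finsetSum_coeff]
  simp only [coeff_monomial, Finset.sum_ite_eq', Finset.mem_range]
  split_ifs with hkN
  · exact sub_self _
  · rw [sub_zero, HahnSeries.coeff_eq_zero_of_lt_order (by omega)]

lemma lsDeg_mul (F H : LaurentSeries K) : lsDeg (F * H) = lsDeg F + lsDeg H := by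
  by_cases hF : F = 0
  · simp [lsDeg, hF]
  by_cases hH : H = 0
  · simp [lsDeg, hH]
  rw [lsDeg, lsDeg, lsDeg, if_neg (mul_ne_zero hF hH), if_neg hF, if_neg hH,
    HahnSeries.order_mul hF hH, ← WithBot.coe_add, neg_add]

lemma lsDeg_eq_neg_of_coeff {S : LaurentSeries K} {v : ℤ} (hv : S.coeff v ≠ 0)
    (h : ∀ j < v, S.coeff j = 0) : lsDeg S = ((-v : ℤ) : WithBot ℤ) := by
  have hS : S ≠ 0 := ne_zero_of_coeff_ne_zero hv
  have hord : S.order = v := le_antisymm (order_le_of_coeff_ne_zero hv) <|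
    not_lt.mp fun hlt => hS (coeff_order_eq_zero.mp (h _ hlt))
  rw [lsDeg, if_neg hS, hord]

lemma neg_le_lsDeg_of_coeff_ne_zero {S : LaurentSeries K} {j : ℤ} (hj : S.coeff j ≠ 0) :
    ((-j : ℤ) : WithBot ℤ) ≤ lsDeg S := by
  rw [lsDeg, if_neg (ne_zero_of_coeff_ne_zero hj), WithBot.coe_le_coe, neg_le_neg_iff]
  exact order_le_of_coeff_ne_zero hj

lemma lsDeg_polyToLS {p : K[X]} (hp : p ≠ 0) :
    lsDeg (polyToLS p) = ((p.natDegree : ℤ) : WithBot ℤ) := by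
  rw [lsDeg_eq_neg_of_coeff (v := -p.natDegree), neg_neg]
  · simpa [coeff_polyToLS_neg_natCast] using hp
  · intro j hj
    obtain ⟨k, rfl⟩ : ∃ k : ℕ, j = -k := ⟨(-j).toNat, by omega⟩
    rw [coeff_polyToLS_neg_natCast]
    exact coeff_eq_zero_of_natDegree_lt (by omega)

end PolyToLS

def hankel {R : Type*} (a : ℕ → R) (n : ℕ) : Matrix (Fin n) (Fin n) R :=
  Matrix.of fun i j => a (i + j)

lemma exists_natDegree_le_coeff_eq {R : Type*} [Semiring R] {n : ℕ} (v : Fin (n + 1) → R) :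
    ∃ p : R[X], p.natDegree ≤ n ∧ ∀ i : Fin (n + 1), p.coeff i = v i := by
  refine ⟨((degreeLTEquiv R (n + 1)).symm v : R[X]), ?_, fun i => ?_⟩
  · have := mem_degreeLT.mp ((degreeLTEquiv R (n + 1)).symm v).2
    exact natDegree_le_of_degree_le (Order.le_of_lt_succ (by exact_mod_cast this))
  · exact congrFun ((degreeLTEquiv R (n + 1)).apply_symm_apply v) i

section Hankel

open Matrix

variable {K : Type*} [Field K] {F : LaurentSeries K}

lemma hankel_mulVec_coeff {n : ℕ} {y : K[X]} (hy : y.natDegree < n) (j : Fin n) :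
    (hankel (fun k : ℕ => F.coeff (k + 1)) n *ᵥ fun i => y.coeff i) j =
      (polyToLS y * F).coeff (j + 1) := by
  rw [coeff_polyToLS_mul hy,
    ← Fin.sum_univ_eq_sum_range (fun i : ℕ => y.coeff i * F.coeff ((j : ℤ) + 1 + i)) n]
  simp only [mulVec, dotProduct, hankel, of_apply]
  refine Finset.sum_congr rfl fun i _ => ?_
  rw [mul_comm]
  push_cast
  ring_nf

theorem neg_natDegree_add_one_le_lsDeg_of_det_hankel_ne_zero
    (hF : ∀ n, (hankel (fun k : ℕ => F.coeff (k + 1)) n).det ≠ 0) {y : K[X]} (hy : y ≠ 0)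
    (x : K[X]) :
    ((-(y.natDegree + 1 : ℤ) : ℤ) : WithBot ℤ) ≤ lsDeg (polyToLS y * F - polyToLS x) := by
  have hvec : (fun i : Fin (y.natDegree + 1) => y.coeff i) ≠ 0 := fun h =>
    (leadingCoeff_ne_zero.mpr hy) (congrFun h (Fin.last _))
  obtain ⟨j, hj⟩ : ∃ j, (hankel (fun k : ℕ => F.coeff (k + 1)) (y.natDegree + 1) *ᵥ
      fun i => y.coeff i) j ≠ 0 :=
    Function.ne_iff.mp fun h => hF _ (Matrix.exists_mulVec_eq_zero_iff.mp ⟨_, hvec, h⟩)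
  rw [hankel_mulVec_coeff (Nat.lt_succ_self _)] at hj
  have hcoeff : (polyToLS y * F - polyToLS x).coeff (j + 1) ≠ 0 := by
    rwa [HahnSeries.coeff_sub, coeff_polyToLS_of_pos x (by positivity), sub_zero]
  exact le_trans (WithBot.coe_le_coe.mpr (by omega)) (neg_le_lsDeg_of_coeff_ne_zero hcoeff)

theorem exists_lsDeg_eq_of_det_hankel_ne_zero {n : ℕ}
    (hF : (hankel (fun k : ℕ => F.coeff (k + 1)) (n + 1)).det ≠ 0) :
    ∃ x y : K[X], y ≠ 0 ∧ y.natDegree ≤ n ∧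
      lsDeg (polyToLS y * F - polyToLS x) = ((-(n + 1 : ℤ) : ℤ) : WithBot ℤ) := by
  set H := hankel (fun k : ℕ => F.coeff (k + 1)) (n + 1)
  set e : Fin (n + 1) → K := Pi.single (Fin.last n) 1
  have hHv : H *ᵥ (H⁻¹ *ᵥ e) = e := by
    rw [Matrix.mulVec_mulVec, Matrix.mul_nonsing_inv _ (isUnit_iff_ne_zero.mpr hF),
      Matrix.one_mulVec]
  obtain ⟨y, hyn, hyv⟩ := exists_natDegree_le_coeff_eq (H⁻¹ *ᵥ e)
  rw [← funext hyv] at hHv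
  have hcoeff (j : Fin (n + 1)) :
      (polyToLS y * F).coeff (j + 1) = if j = Fin.last n then 1 else 0 := by
    rw [← hankel_mulVec_coeff (Nat.lt_succ_of_le hyn), hHv]
    exact Pi.single_apply _ _ _
  obtain ⟨x, hx⟩ := exists_coeff_sub_polyToLS_eq_zero (polyToLS y * F)
  have htop : (polyToLS y * F - polyToLS x).coeff (n + 1) = 1 := by
    rw [HahnSeries.coeff_sub, coeff_polyToLS_of_pos x (by omega), sub_zero]
    simpa using hcoeff (Fin.last n)
  refine ⟨x, y, fun hy => ?_, hyn, lsDeg_eq_neg_of_coeff (htop ▸ one_ne_zero) fun j hj => ?_⟩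
  · simpa [hy, polyToLS] using hcoeff (Fin.last n)
  · rcases le_or_gt j 0 with hj0 | hj0
    · exact hx j hj0
    obtain ⟨k, rfl⟩ : ∃ k : ℕ, j = k + 1 := ⟨(j - 1).toNat, by omega⟩
    rw [HahnSeries.coeff_sub, coeff_polyToLS_of_pos x hj0, sub_zero]
    exact (hcoeff ⟨k, by omega⟩).trans (if_neg fun h => by simp [Fin.ext_iff] at h; omega)

theorem exists_coprime_lsDeg_eq_of_det_hankel_ne_zero
    (hF : ∀ n, (hankel (fun k : ℕ => F.coeff (k + 1)) n).det ≠ 0) (n : ℕ) :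
    ∃ x y : K[X], IsCoprime x y ∧ y.natDegree = n ∧
      lsDeg (polyToLS y * F - polyToLS x) = ((-(n + 1 : ℤ) : ℤ) : WithBot ℤ) := by
  obtain ⟨x, y, hy, hyn, hS⟩ := exists_lsDeg_eq_of_det_hankel_ne_zero (hF (n + 1))
  have hbound := neg_natDegree_add_one_le_lsDeg_of_det_hankel_ne_zero hF hy x
  rw [hS, WithBot.coe_le_coe] at hbound
  refine ⟨x, y, isCoprime_of_dvd _ _ (fun h => hy h.2) ?_, by omega, hS⟩
  rintro z hz hz0 ⟨x₁, rfl⟩ ⟨y₁, rfl⟩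
  have hy₁ : y₁ ≠ 0 := right_ne_zero_of_mul hy
  have hz_deg : 0 < z.natDegree := by
    by_contra! h
    refine hz (isUnit_iff_degree_eq_zero.mpr ?_)
    rw [degree_eq_natDegree hz0, Nat.le_zero.mp h]
    rfl
  have hfactor : polyToLS (z * y₁) * F - polyToLS (z * x₁) =
      polyToLS z * (polyToLS y₁ * F - polyToLS x₁) := by
    simp only [polyToLS, map_mul]
    ring
  obtain ⟨e, he, hle⟩ :=
    WithBot.coe_le_iff.mp (neg_natDegree_add_one_le_lsDeg_of_det_hankel_ne_zero hF hy₁ x₁)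
  rw [hfactor, lsDeg_mul, lsDeg_polyToLS hz0, he, ← WithBot.coe_add, WithBot.coe_inj] at hS
  rw [natDegree_mul hz0 hy₁] at hyn
  omega

end Hankel

/-- `∏_{h<m} (1 + t^{3^h})` in the variable `t = X⁻¹` of `LaurentSeries`. -/
noncomputable def cantorPoly (R : Type*) [CommSemiring R] (m : ℕ) : R[X] :=
  ∏ h ∈ Finset.range m, (1 + X ^ 3 ^ h)

lemma map_cantorPoly {R S : Type*} [CommSemiring R] [CommSemiring S] (f : R →+* S) (m : ℕ) :
    (cantorPoly R m).map f = cantorPoly S m := by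
  simp [cantorPoly, Polynomial.map_prod]

lemma one_add_X_mul_cantorPoly_sq (R : Type*) [CommRing R] [CharP R 3] (m : ℕ) :
    (1 + X) * cantorPoly R m ^ 2 = 1 + X ^ 3 ^ m := by
  induction m with
  | zero => simp [cantorPoly]
  | succ m ih =>
    have hfrob := add_pow_char (1 : R[X]) (X ^ 3 ^ m) 3
    rw [one_pow, ← pow_mul, ← pow_succ] at hfrob
    rw [cantorPoly, Finset.prod_range_succ, ← cantorPoly, ← hfrob, ← ih]
    ring

lemma mul_self_ne_mul_mul_self_of_odd_natDegree {R : Type*} [CommRing R] [IsDomain R]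
    {p q : R[X]} (hq : Odd q.natDegree) (hp : p ≠ 0) (r : R[X]) : p * p ≠ q * (r * r) := by
  intro h
  have hr : r ≠ 0 := by rintro rfl; simp [hp] at h
  have hq0 : q ≠ 0 := by rintro rfl; simp at hq
  have := congrArg natDegree h
  rw [natDegree_mul hp hp, natDegree_mul hq0 (mul_ne_zero hr hr), natDegree_mul hr hr] at this
  obtain ⟨k, hk⟩ := hq
  omega

lemma coeff_reflect_mul {R : Type*} [Semiring R] {N : ℕ} {y : R[X]} (hy : y.natDegree ≤ N)
    (P : R[X]) (k : ℕ) :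
    (reflect N y * P).coeff (N + k) =
      ∑ i ∈ Finset.range (N + 1), y.coeff i * P.coeff (k + i) := by
  rw [Polynomial.coeff_mul, Finset.Nat.sum_antidiagonal_eq_sum_range_succ
    (fun a b => (reflect N y).coeff a * P.coeff b), ← Finset.sum_subset
    (Finset.range_subset_range.mpr (by omega : N + 1 ≤ (N + k).succ)),
    ← Finset.sum_range_reflect]
  · refine Finset.sum_congr rfl fun i hi => ?_
    have hiN := Finset.mem_range.mp hi
    rw [coeff_reflect, revAt_le (by omega), show N - (N + 1 - 1 - i) = i by omega,
      show N + k - (N + 1 - 1 - i) = k + i by omega]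
  · intro a _ ha
    have haN : N < a := by simpa using ha
    rw [coeff_reflect, revAt_eq_self_of_lt haN, coeff_eq_zero_of_natDegree_lt (by omega),
      zero_mul]

open Matrix in
theorem det_hankel_cantorPoly_ne_zero {n m : ℕ} (hnm : 2 * n ≤ 3 ^ m) :
    (hankel (fun k => (cantorPoly (ZMod 3) m).coeff (k + 1)) n).det ≠ 0 := by
  rcases n with _ | N
  · simp
  set P := cantorPoly (ZMod 3) m
  intro hdet
  obtain ⟨v, hv0, hv⟩ := exists_mulVec_eq_zero_iff.mpr hdet
  obtain ⟨y, hyN, hyv⟩ := exists_natDegree_le_coeff_eq v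
  have hy0 : y ≠ 0 := fun h => hv0 (funext fun i => by simp [← hyv, h])
  -- Reversing `y` turns the Hankel equations into the vanishing of the coefficients of `V * P`
  -- in degrees `N + 1, …, 2N + 1`.
  set V := reflect N y
  have hV0 : V ≠ 0 := fun h => hy0 (reflect_eq_zero_iff.mp h)
  have hVN : V.natDegree ≤ N := natDegree_reflect_le.trans (max_le le_rfl hyN)
  set W := PowerSeries.trunc (N + 1) ((V * P : (ZMod 3)[X]) : PowerSeries (ZMod 3)) with hW
  have hWN : W.natDegree ≤ N := Nat.lt_succ_iff.mp (PowerSeries.natDegree_trunc_lt _ N)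
  have hVPW : X ^ (2 * (N + 1)) ∣ V * P - W := by
    refine X_pow_dvd_iff.mpr fun d hd => ?_
    rw [Polynomial.coeff_sub, hW, PowerSeries.coeff_trunc, Polynomial.coeff_coe]
    split_ifs with hdN
    · exact sub_self _
    obtain ⟨j, rfl⟩ : ∃ j : ℕ, d = N + (j + 1) := ⟨d - N - 1, by omega⟩
    rw [sub_zero, coeff_reflect_mul hyN, ← Fin.sum_univ_eq_sum_range
      (fun i => y.coeff i * P.coeff (j + 1 + i))]
    have hrow := congrFun hv ⟨j, by omega⟩
    simp only [mulVec, dotProduct, hankel, of_apply, Pi.zero_apply] at hrow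
    rw [← hrow]
    refine Finset.sum_congr rfl fun i _ => ?_
    rw [hyv, mul_comm, show j + 1 + (i : ℕ) = j + i + 1 by omega]
  have hnorm : V * V - (1 + X) * (W * W) =
      (1 + X) * (V * P - W) * (V * P + W) - V * V * X ^ 3 ^ m := by
    linear_combination -(V * V) * one_add_X_mul_cantorPoly_sq (ZMod 3) m
  have hdvd : X ^ (2 * (N + 1)) ∣ V * V - (1 + X) * (W * W) := by
    rw [hnorm]
    exact dvd_sub (dvd_mul_of_dvd_left (dvd_mul_of_dvd_right hVPW _) _)
      (dvd_mul_of_dvd_right (pow_dvd_pow X hnm) _)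
  have h1X : (1 + X : (ZMod 3)[X]).natDegree = 1 := by rw [add_comm, ← C_1, natDegree_X_add_C]
  have hdeg : (V * V - (1 + X) * (W * W)).natDegree <
      (X ^ (2 * (N + 1)) : (ZMod 3)[X]).natDegree := by
    rw [natDegree_X_pow]
    refine (natDegree_sub_le _ _).trans_lt (max_lt ?_ ?_)
    · exact natDegree_mul_le.trans_lt (by omega)
    · have := natDegree_mul_le (p := W) (q := W)
      exact natDegree_mul_le.trans_lt (by omega)
  exact mul_self_ne_mul_mul_self_of_odd_natDegree (h1X ▸ odd_one) hV0 W
    (sub_eq_zero.mp (eq_zero_of_dvd_of_natDegree_lt hdvd hdeg))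

lemma RingHom.map_det_hankel {R S : Type*} [CommRing R] [CommRing S] (f : R →+* S) (a : ℕ → R)
    (n : ℕ) : f (hankel a n).det = (hankel (fun k => f (a k)) n).det :=
  f.map_det _

lemma coeff_prod_one_add_single (R : Type*) [CommRing R] (m k : ℕ) :
    (∏ h ∈ Finset.range m, (1 + single ((3 : ℤ) ^ h) (1 : R))).coeff (k : ℤ) =
      (cantorPoly R m).coeff k := by
  have hprod : ∏ h ∈ Finset.range m, (1 + single ((3 : ℤ) ^ h) (1 : R)) =
      ofPowerSeries ℤ R (cantorPoly R m : PowerSeries R) := by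
    rw [cantorPoly, ← coeToPowerSeries.ringHom_apply, map_prod, map_prod]
    simp [ofPowerSeries_X, single_pow]
  rw [hprod, ofPowerSeries_apply_coeff, Polynomial.coeff_coe]

theorem det_hankel_coeff_ne_zero_of_coeff_eq_prod {G : LaurentSeries ℚ}
    (hG : ∀ (m : ℕ) (n : ℤ), n < 3 ^ m →
      G.coeff n = (∏ h ∈ Finset.range m, (1 + single ((3 : ℤ) ^ h) (1 : ℚ))).coeff n)
    (n : ℕ) :
    (hankel (fun k : ℕ => G.coeff (k + 1)) n).det ≠ 0 := by
  set m := 2 * n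
  have hm : 2 * n < 3 ^ m := Nat.lt_pow_self (by norm_num)
  have hmℤ : (2 * n : ℤ) < 3 ^ m := by exact_mod_cast hm
  have hH : hankel (fun k : ℕ => G.coeff (k + 1)) n =
      hankel (fun k => Int.castRingHom ℚ ((cantorPoly ℤ m).coeff (k + 1))) n := by
    ext i j
    simp only [hankel, Matrix.of_apply]
    rw [hG m _ (by push_cast; omega), ← Nat.cast_succ, coeff_prod_one_add_single,
      ← map_cantorPoly (Int.castRingHom ℚ), coeff_map]
  rw [hH, ← RingHom.map_det_hankel, eq_intCast, Int.cast_ne_zero]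
  intro h0
  refine det_hankel_cantorPoly_ne_zero hm.le ?_
  rw [← map_cantorPoly (Int.castRingHom (ZMod 3))]
  simp only [coeff_map]
  rw [← RingHom.map_det_hankel, h0, map_zero]

theorem cantor_product_all_partial_quotients_linear
    (G : LaurentSeries ℚ)
    -- `G` is the infinite product `∏_{h=0}^∞ (1 + X^{-3^h})`, characterised by agreeing,
    -- in each coefficient of `X^{-n}` with `n < 3^m`, with the partial product over `h < m`.
    (hG : ∀ (m : ℕ) (n : ℤ), n < 3 ^ m →
      G.coeff n =
        (∏ h ∈ Finset.range m,
          (1 + HahnSeries.single ((3 : ℤ) ^ h) (1 : ℚ))).coeff n) :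
    ∀ n : ℕ, ∃ x y : ℚ[X], IsCoprime x y ∧ y.natDegree = n ∧
      lsDeg (polyToLS y * G - polyToLS x) = ((-(n + 1 : ℤ) : ℤ) : WithBot ℤ) :=
  exists_coprime_lsDeg_eq_of_det_hankel_ne_zero (det_hankel_coeff_ne_zero_of_coeff_eq_prod hG)
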